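/- arXiv:2604.17164 — 3 statements merged into one kernel-verified Lean document; each statement's English description precedes it below -/
import Mathlib

section
/- Let X be a Hausdorff space with a nested clopen subbase C. Suppose [U,F] = U \ ⋃_{α∈F} U_α is a nonempty basic open set (U ∈ C, F ⊆ C finite, each U_α ∈ C). Then there is at most one point x ∈ [U,F] such that U is the smallest element of C containing x (i.e., no V ∈ C satisfies x ∈ V ⊊ U). -/
open TopologicalSpace

/-- In a Hausdorff space with a nested clopen subbase `C` whose derived family
`{ U \ ⋃₀ F }` is a base, each nonempty basic open set `[U,F] = U \ ⋃₀ F`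
contains at most one point `x` for which `U` is the smallest element of `C`
containing `x`. -/
theorem stmt_3 {X : Type*} [TopologicalSpace X] [T2Space X] (C : Set (Set X))
    (hclopen : ∀ U ∈ C, IsClopen U)
    (hnested : ∀ U ∈ C, ∀ V ∈ C, U ∩ V = ∅ ∨ U ⊆ V ∨ V ⊆ U)
    (hbase : IsTopologicalBasis
      {s : Set X | ∃ U ∈ C, ∃ F : Set (Set X),
        F ⊆ C ∧ F.Finite ∧ s = U \ ⋃₀ F})
    (U : Set X) (hU : U ∈ C) (F : Set (Set X)) (hFC : F ⊆ C) (hF : F.Finite)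
    (hne : (U \ ⋃₀ F).Nonempty) :
    ∀ x ∈ U \ ⋃₀ F, ∀ y ∈ U \ ⋃₀ F,
      (¬ ∃ V ∈ C, x ∈ V ∧ V ⊂ U) → (¬ ∃ V ∈ C, y ∈ V ∧ V ⊂ U) → x = y := by
  intro x hx y hy hxm hym
  by_contra hxy
  have hxmem : x ∈ ({y}ᶜ : Set X) := by simpa using hxy
  obtain ⟨s, hs, hxs, hsub⟩ :=
    hbase.exists_subset_of_mem_open hxmem isOpen_compl_singleton
  obtain ⟨W, hWC, G, hGC, hGfin, rfl⟩ := hs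
  have hxW : x ∈ W := hxs.1
  have hUW : U ⊆ W := by
    rcases hnested U hU W hWC with h | h | h
    · exact absurd h (by
        intro h
        have : x ∈ U ∩ W := ⟨hx.1, hxW⟩
        simp [h] at this)
    · exact h
    · rcases h.ssubset_or_eq with h' | h'
      · exact absurd ⟨W, hWC, hxW, h'⟩ hxm
      · exact h'.ge
  have hyW : y ∈ W := hUW hy.1
  have hyG : y ∈ ⋃₀ G := by
    by_contra h
    exact hsub ⟨hyW, h⟩ rfl
  obtain ⟨Gα, hGαG, hyGα⟩ := hyG
  have hGαC : Gα ∈ C := hGC hGαG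
  have hxGα : x ∉ Gα := fun h => hxs.2 ⟨Gα, hGαG, h⟩
  rcases hnested Gα hGαC U hU with h | h | h
  · have : y ∈ Gα ∩ U := ⟨hyGα, hy.1⟩
    simp [h] at this
  · rcases h.ssubset_or_eq with h' | h'
    · exact absurd ⟨Gα, hGαC, hyGα, h'⟩ hym
    · exact hxGα (h' ▸ hx.1)
  · exact hxGα (h hx.1)
end

section
/- The product of the Michael line M with the irrationals ℝ \ ℚ (with their usual subspace topology from ℝ) is not a normal topological space. -/
/-- The Michael line: the reals retopologized so that irrational points are
isolated while rational points keep their Euclidean neighborhoods. -/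
def michaelTopology : TopologicalSpace ℝ :=
  TopologicalSpace.generateFrom
    ({s : Set ℝ | IsOpen s} ∪ {s : Set ℝ | ∃ x : ℝ, Irrational x ∧ s = {x}})

/-- Type synonym for the Michael line. -/
def MLine : Type := ℝ

instance : TopologicalSpace MLine := michaelTopology

def michaelGens : Set (Set ℝ) :=
  {s : Set ℝ | IsOpen s} ∪ {s : Set ℝ | ∃ x : ℝ, Irrational x ∧ s = {x}}

lemma mOpen_of_open {s : Set ℝ} (h : IsOpen s) : @IsOpen MLine _ s :=
  TopologicalSpace.GenerateOpen.basic (g := michaelGens) s (Or.inl h)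

lemma mOpen_singleton {x : ℝ} (hx : Irrational x) : @IsOpen MLine _ {x} :=
  TopologicalSpace.GenerateOpen.basic (g := michaelGens) {x} (Or.inr ⟨x, hx, rfl⟩)

lemma mOpen_rat_nbhd {s : Set MLine} (hs : IsOpen s) {q : ℝ} (hq : ¬ Irrational q)
    (hqs : q ∈ s) : ∃ t : Set ℝ, IsOpen t ∧ q ∈ t ∧ t ⊆ s := by
  have h : TopologicalSpace.GenerateOpen michaelGens s := hs
  clear hs
  revert hqs
  induction h with
  | basic u hu =>
    intro hqs
    rcases hu with hu | ⟨x, hx, rfl⟩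
    · exact ⟨u, hu, hqs, le_refl _⟩
    · exact absurd (hqs ▸ hx) hq
  | univ => exact fun _ => ⟨Set.univ, isOpen_univ, trivial, le_refl _⟩
  | inter u v _ _ ihu ihv =>
    intro hqs
    obtain ⟨t1, ht1, hq1, hs1⟩ := ihu hqs.1
    obtain ⟨t2, ht2, hq2, hs2⟩ := ihv hqs.2
    exact ⟨t1 ∩ t2, ht1.inter ht2, ⟨hq1, hq2⟩, fun z hz => ⟨hs1 hz.1, hs2 hz.2⟩⟩
  | sUnion S _ ih =>
    rintro ⟨u, huS, hqu⟩
    obtain ⟨t, ht, hqt, hts⟩ := ih u huS hqu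
    exact ⟨t, ht, hqt, fun z hz => ⟨u, huS, hts hz⟩⟩

lemma michael_key : ¬ NormalSpace (MLine × {x : ℝ // Irrational x}) := by
  intro h
  set Irr := {x : ℝ // Irrational x}
  -- the two disjoint closed sets
  set A : Set (MLine × Irr) := {p | p.1 = (p.2 : ℝ)} with hAdef
  set B : Set (MLine × Irr) := {p | ¬ Irrational (p.1 : ℝ)} with hBdef
  have hA : IsClosed A := by
    rw [← isOpen_compl_iff]
    rw [isOpen_iff_forall_mem_open]
    rintro ⟨x, y⟩ hp
    have hxy : (show ℝ from x) ≠ (y : ℝ) := hp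
    set r : ℝ := |(show ℝ from x) - (y : ℝ)| with hr
    have hrpos : 0 < r := abs_sub_pos.mpr hxy
    refine ⟨(Metric.ball (show ℝ from x) (r / 2) : Set ℝ) ×ˢ
      ((Subtype.val : Irr → ℝ) ⁻¹' Metric.ball ((y : Irr) : ℝ) (r / 2)), ?_, ?_, ?_⟩
    · rintro ⟨x', y'⟩ ⟨hx', hy'⟩ hxy'
      have h1 : |(show ℝ from x') - (show ℝ from x)| < r / 2 := by
        have h : dist (show ℝ from x') (show ℝ from x) < r / 2 := hx'
        rwa [Real.dist_eq] at h
      have h2 : |(y' : ℝ) - (y : ℝ)| < r / 2 := by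
        have h : dist (y' : ℝ) (y : ℝ) < r / 2 := hy'
        rwa [Real.dist_eq] at h
      have hxey : (show ℝ from x') = (y' : ℝ) := hxy'
      have : r < r := by
        calc r = |(show ℝ from x) - (y:ℝ)| := hr
        _ ≤ |(show ℝ from x) - (show ℝ from x')| + |(show ℝ from x') - (y:ℝ)| :=
            abs_sub_le _ _ _
        _ = |(show ℝ from x') - (show ℝ from x)| + |(y':ℝ) - (y:ℝ)| := by
            rw [abs_sub_comm, hxey]
        _ < r / 2 + r / 2 := add_lt_add h1 h2
        _ = r := by ring
      exact absurd this (lt_irrefl r)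
    · exact (mOpen_of_open Metric.isOpen_ball).prod
        (continuous_subtype_val.isOpen_preimage _ Metric.isOpen_ball)
    · exact ⟨Metric.mem_ball_self (by linarith), Metric.mem_ball_self (by linarith)⟩
  have hB : IsClosed B := by
    rw [← isOpen_compl_iff]
    have : Bᶜ = {x : MLine | Irrational (x : ℝ)} ×ˢ (Set.univ : Set Irr) := by
      ext p; simp [hBdef, Set.mem_prod]; exact Iff.rfl
    rw [this]
    have : IsOpen ({x : MLine | Irrational (x : ℝ)} : Set MLine) := by
      have : {x : MLine | Irrational (x : ℝ)} =
          ⋃ x ∈ {y : ℝ | Irrational y}, ({x} : Set MLine) := by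
        ext z; simp
        exact ⟨fun h => ⟨z, h, Set.mem_singleton z⟩, fun ⟨i, hi, hz⟩ => by
          rw [Set.mem_singleton_iff.mp hz]; exact hi⟩
      rw [this]
      exact isOpen_biUnion fun x hx => mOpen_singleton hx
    exact this.prod isOpen_univ
  have hAB : Disjoint A B := by
    rw [Set.disjoint_left]
    rintro ⟨x, y⟩ hpA hpB
    exact hpB (hpA ▸ y.2)
  obtain ⟨U, V, hU, hV, hAU, hBV, hUV⟩ := h.normal A B hA hB hAB
  -- choose epsilons for points on the diagonal
  have hexeps : ∀ y : Irr, ∃ ε : ℝ, 0 < ε ∧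
      ∀ z : Irr, dist z y < ε → ((y : ℝ), z) ∈ U := by
    intro y
    have hyU : (((y : ℝ) : MLine), y) ∈ U := hAU rfl
    obtain ⟨u, v, hu, hv, hyu, hyv, huv⟩ := isOpen_prod_iff.mp hU _ y hyU
    obtain ⟨ε, hε, hball⟩ := Metric.isOpen_iff.mp hv y hyv
    exact ⟨ε, hε, fun z hz => huv ⟨hyu, hball hz⟩⟩
  choose ε hεpos hεU using hexeps
  -- Baire category argument
  set E : ℕ → Set ℝ := fun n => {x | ∃ hx : Irrational x, 1 / (n + 1 : ℝ) ≤ ε ⟨x, hx⟩}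
    with hEdef
  have hcover : (⋃ i : ℚ ⊕ ℕ, Sum.elim (fun q : ℚ => ({(q : ℝ)} : Set ℝ))
      (fun n => closure (E n)) i) = Set.univ := by
    rw [Set.eq_univ_iff_forall]
    intro x
    rw [Set.mem_iUnion]
    by_cases hx : Irrational x
    · obtain ⟨n, hn⟩ := exists_nat_one_div_lt (hεpos ⟨x, hx⟩)
      exact ⟨Sum.inr n, subset_closure ⟨hx, le_of_lt hn⟩⟩
    · rw [Irrational, not_not] at hx
      obtain ⟨q, hq⟩ := hx
      exact ⟨Sum.inl q, hq ▸ rfl⟩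
  obtain ⟨i, hi⟩ := nonempty_interior_of_iUnion_of_closed
    (f := Sum.elim (fun q : ℚ => ({(q : ℝ)} : Set ℝ)) (fun n => closure (E n)))
    (fun i => by cases i <;> simp [isClosed_singleton, isClosed_closure]) hcover
  obtain (q | n) := i
  · rw [Sum.elim_inl, interior_singleton] at hi
    exact absurd hi (by simp)
  rw [Sum.elim_inr] at hi
  -- find a rational q in the interior of closure (E n)
  obtain ⟨z, hz⟩ := hi
  have hzopen : IsOpen (interior (closure (E n))) := isOpen_interior
  obtain ⟨q, hq⟩ := (Rat.denseRange_cast (𝕜 := ℝ)).exists_mem_open hzopen ⟨z, hz⟩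
  have hqcl : (q : ℝ) ∈ closure (E n) := interior_subset hq
  -- pick an irrational y close to q
  obtain ⟨y0, hy0irr, hy0l, hy0r⟩ := exists_irrational_btwn
    (show (q : ℝ) < q + 1 / (2 * (n + 1)) by
      have : (0:ℝ) < 1 / (2 * ((n:ℝ) + 1)) := by positivity
      linarith)
  set y : Irr := ⟨y0, hy0irr⟩ with hy
  have hdyq : |y0 - (q : ℝ)| < 1 / (2 * (n + 1)) := by
    rw [abs_of_pos (by linarith)]; linarith
  -- (q, y) ∈ V
  have hqyV : (((q : ℝ) : MLine), y) ∈ V := hBV (Rat.not_irrational q)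
  obtain ⟨W, v, hW, hv, hqW, hyv, hWv⟩ := isOpen_prod_iff.mp hV _ y hqyV
  obtain ⟨W', hW', hqW', hW'W⟩ := mOpen_rat_nbhd hW (Rat.not_irrational q) hqW
  -- pick x ∈ E n near q, inside W'
  have hmeet : ((W' ∩ Metric.ball (q : ℝ) (1 / (2 * ((n : ℝ) + 1)))) ∩ E n).Nonempty :=
    mem_closure_iff.mp hqcl (W' ∩ Metric.ball (q : ℝ) (1 / (2 * ((n : ℝ) + 1))))
      (hW'.inter Metric.isOpen_ball)
      ⟨hqW', Metric.mem_ball_self (by positivity)⟩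
  obtain ⟨x, ⟨⟨hxW', hxball⟩, hxirr, hxε⟩⟩ := hmeet
  set xI : Irr := ⟨x, hxirr⟩
  have hdxy : dist y xI < ε xI := by
    have h1 : |x - (q : ℝ)| < 1 / (2 * (n + 1)) := by simpa [Real.dist_eq] using hxball
    have : dist y xI = |y0 - x| := Subtype.dist_eq y xI
    rw [this]
    calc |y0 - x| ≤ |y0 - (q : ℝ)| + |(q : ℝ) - x| := abs_sub_le _ _ _
      _ = |y0 - (q : ℝ)| + |x - (q : ℝ)| := by rw [abs_sub_comm (q : ℝ) x]
      _ < 1 / (2 * (n + 1)) + 1 / (2 * (n + 1)) := add_lt_add hdyq h1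
      _ = 1 / (n + 1 : ℝ) := by
          have hne : ((n:ℝ) + 1) ≠ 0 := by positivity
          field_simp
          norm_num
      _ ≤ ε xI := hxε
  have hxyU : ((x : MLine), y) ∈ U := hεU xI y hdxy
  have hxyV : ((x : MLine), y) ∈ V := hWv ⟨hW'W hxW', hyv⟩
  exact Set.disjoint_left.mp hUV hxyU hxyV

/-- The product of the Michael line with the irrationals (with the usual
subspace topology from ℝ) is not normal. -/
theorem stmt_16 :
    ¬ @NormalSpace (ℝ × {x : ℝ // Irrational x})
        (@instTopologicalSpaceProd _ _ michaelTopology inferInstance) := by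
  exact michael_key
end

section
/- The product of ℵ₁ many copies of the discrete space ℕ, i.e., ℕ^{ω₁} with the product topology, is not a normal topological space. -/
open Set

namespace Stone17

variable {I : Type*}

/-- functions where every value except `k` is attained at most once -/
def A (k : ℕ) : Set (I → ℕ) := {f | ∀ n, n ≠ k → ∀ i j, f i = n → f j = n → i = j}

theorem isClosed_A (k : ℕ) : IsClosed (A (I := I) k) := by
  have : A (I := I) k = ⋂ (n : ℕ) (_ : n ≠ k) (i : I) (j : I),
      {f : I → ℕ | f i = n → f j = n → i = j} := by
    ext f; simp [A]
  rw [this]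
  refine isClosed_iInter fun n => isClosed_iInter fun hn => isClosed_iInter fun i =>
    isClosed_iInter fun j => ?_
  by_cases hij : i = j
  · have : {f : I → ℕ | f i = n → f j = n → i = j} = univ := by
      ext f; simp [hij]
    rw [this]; exact isClosed_univ
  · have : {f : I → ℕ | f i = n → f j = n → i = j} =
        ({f : I → ℕ | f i = n} ∩ {f | f j = n})ᶜ := by
      ext f; simp only [mem_compl_iff, mem_inter_iff, mem_setOf_eq, not_and]
      constructor
      · intro h h1 h2; exact hij (h h1 h2)
      · intro h h1 h2; exact absurd h2 (h h1)
    rw [this]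
    have ho : ∀ a : I, IsOpen {f : I → ℕ | f a = n} := fun a => by
      have : {f : I → ℕ | f a = n} = (fun f : I → ℕ => f a) ⁻¹' {n} := rfl
      rw [this]
      exact IsOpen.preimage (continuous_apply a) (isOpen_discrete {n})
    exact isClosed_compl_iff.2 (IsOpen.inter (ho i) (ho j))

variable [DecidableEq I]

/-- the function assigning to each member of `L` its index plus one, and `0` elsewhere -/
def fL (L : List I) : I → ℕ := fun i => if i ∈ L then L.idxOf i + 1 else 0

theorem fL_mem_A0 (L : List I) : fL L ∈ A (I := I) 0 := by
  intro n hn i j hi hj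
  unfold fL at hi hj
  by_cases hiL : i ∈ L
  · by_cases hjL : j ∈ L
    · rw [if_pos hiL] at hi; rw [if_pos hjL] at hj
      exact (List.idxOf_inj hiL).1 (by omega)
    · rw [if_neg hjL] at hj; exact absurd hj.symm hn
  · rw [if_neg hiL] at hi; exact absurd hi.symm hn

omit [DecidableEq I] in
/-- cylinder neighborhoods generate the product topology -/
theorem cyl {W : Set (I → ℕ)} (hW : IsOpen W) {f : I → ℕ} (hf : f ∈ W) :
    ∃ F : Finset I, ∀ h : I → ℕ, (∀ i ∈ F, h i = f i) → h ∈ W := by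
  obtain ⟨F, u, hu, hsub⟩ := isOpen_pi_iff.1 hW f hf
  refine ⟨F, fun h hh => hsub fun a ha => ?_⟩
  rw [hh a ha]; exact (hu a ha).2

end Stone17

/-- A. H. Stone: the product of ℵ₁ many copies of the discrete space ℕ is not
normal. -/
theorem stmt_17 (I : Type*) (hI : Cardinal.mk I = Cardinal.aleph 1) :
    ¬ NormalSpace (I → ℕ) := by
  classical
  intro hN
  -- the two closed sets are disjoint since `I` is uncountable
  have hdisj : Disjoint (Stone17.A (I := I) 0) (Stone17.A (I := I) 1) := by
    rw [Set.disjoint_left]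
    intro f hf0 hf1
    have hinj : Function.Injective f := by
      intro i j hij
      by_cases h0 : f i = 0
      · exact hf1 0 (by norm_num) i j h0 (hij ▸ h0)
      · exact hf0 (f i) h0 i j rfl hij.symm
    have : Countable I := ⟨⟨f, hinj⟩⟩
    have hle : Cardinal.mk I ≤ Cardinal.aleph0 := Cardinal.mk_le_aleph0
    rw [hI] at hle
    exact (Cardinal.aleph0_lt_aleph_one).not_ge hle
  obtain ⟨U, V, hU, hV, hA0U, hA1V, hUV⟩ :=
    normal_separation (Stone17.isClosed_A 0) (Stone17.isClosed_A 1) hdisj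
  -- choice of cylinders inside U around each `fL L`
  have key : ∀ L : List I, ∃ F : Finset I,
      ∀ h : I → ℕ, (∀ i ∈ F, h i = Stone17.fL L i) → h ∈ U :=
    fun L => Stone17.cyl hU (hA0U (Stone17.fL_mem_A0 L))
  set Fc : List I → Finset I := fun L => (key L).choose with hFc
  have Fspec : ∀ L : List I, ∀ h : I → ℕ,
      (∀ i ∈ Fc L, h i = Stone17.fL L i) → h ∈ U := fun L => (key L).choose_spec
  -- the recursively constructed lists
  set step : List I → List I := fun L => L ++ (Fc L).toList.filter (fun i => i ∉ L)
    with hstep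
  set LL : ℕ → List I := fun n => Nat.rec [] (fun _ L => step L) n with hLL
  have LLsucc : ∀ n, LL (n + 1) = step (LL n) := fun n => rfl
  have nodup : ∀ n, (LL n).Nodup := by
    intro n
    induction n with
    | zero => exact List.nodup_nil
    | succ n ih =>
      rw [LLsucc, hstep]
      refine List.Nodup.append ih ((Finset.nodup_toList _).filter _) ?_
      intro a haL hafil
      have := List.of_mem_filter hafil
      simp only [decide_eq_true_eq] at this
      exact this haL
  have pref : ∀ m n, m ≤ n → LL m <+: LL n := by
    intro m n hmn
    induction n, hmn using Nat.le_induction with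
    | base => exact List.prefix_refl _
    | succ n hmn ih => exact ih.trans ⟨_, (LLsucc n).symm⟩
  have memLL : ∀ {i m n}, m ≤ n → i ∈ LL m → i ∈ LL n := by
    intro i m n hmn hi
    exact (pref m n hmn).sublist.mem hi
  have idx_stable : ∀ {i m n}, m ≤ n → i ∈ LL m →
      (LL n).idxOf i = (LL m).idxOf i := by
    intro i m n hmn hi
    obtain ⟨t, ht⟩ := pref m n hmn
    rw [← ht, List.idxOf_append_of_mem hi]
  have Fc_mem : ∀ {i n}, i ∈ Fc (LL n) → i ∈ LL (n + 1) := by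
    intro i n hi
    rw [LLsucc, hstep]
    by_cases hiL : i ∈ LL n
    · exact List.mem_append_left _ hiL
    · exact List.mem_append_right _
        (List.mem_filter.2 ⟨Finset.mem_toList.2 hi, by simp [hiL]⟩)
  -- the limit function g
  set g : I → ℕ := fun i =>
    if h : ∃ n, i ∈ LL n then (LL h.choose).idxOf i + 1 else 1 with hg
  have gval : ∀ {i n}, i ∈ LL n → g i = (LL n).idxOf i + 1 := by
    intro i n hi
    have hex : ∃ m, i ∈ LL m := ⟨n, hi⟩
    rw [hg]; simp only [dif_pos hex]
    have h1 := hex.choose_spec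
    have e1 := idx_stable (le_max_left hex.choose n) h1
    have e2 := idx_stable (le_max_right hex.choose n) hi
    omega
  have gA1 : g ∈ Stone17.A (I := I) 1 := by
    intro n hn i j hi hj
    have hiS : ∃ m, i ∈ LL m := by
      by_contra hc; rw [hg] at hi; simp only [dif_neg hc] at hi; exact hn hi.symm
    have hjS : ∃ m, j ∈ LL m := by
      by_contra hc; rw [hg] at hj; simp only [dif_neg hc] at hj; exact hn hj.symm
    obtain ⟨mi, hmi⟩ := hiS
    obtain ⟨mj, hmj⟩ := hjS
    have hi' : i ∈ LL (max mi mj) := memLL (le_max_left _ _) hmi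
    have hj' : j ∈ LL (max mi mj) := memLL (le_max_right _ _) hmj
    rw [gval hi'] at hi
    rw [gval hj'] at hj
    exact (List.idxOf_inj hi').1 (by omega)
  -- cylinder inside V around g
  obtain ⟨E, hE⟩ := Stone17.cyl hV (hA1V gA1)
  set N : ℕ := (E.filter (fun i => ∃ n, i ∈ LL n)).sup
    (fun i => if h : ∃ n, i ∈ LL n then h.choose else 0) with hN'
  have hEN : ∀ i ∈ E, (∃ n, i ∈ LL n) → i ∈ LL N := by
    intro i hiE hex
    have hmem : i ∈ E.filter (fun i => ∃ n, i ∈ LL n) := Finset.mem_filter.2 ⟨hiE, hex⟩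
    have hle : (if h : ∃ n, i ∈ LL n then h.choose else 0) ≤ N :=
      Finset.le_sup (f := fun i => if h : ∃ n, i ∈ LL n then h.choose else 0) hmem
    rw [dif_pos hex] at hle
    exact memLL hle hex.choose_spec
  -- the witness in U ∩ V
  set h : I → ℕ := fun i =>
    if i ∈ LL N then (LL N).idxOf i + 1 else if i ∈ E then 1 else 0 with hh
  have hhU : h ∈ U := by
    apply Fspec (LL N)
    intro i hi
    have hiN1 : i ∈ LL (N + 1) := Fc_mem hi
    by_cases hiN : i ∈ LL N
    · rw [hh]; simp only [if_pos hiN]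
      rw [Stone17.fL, if_pos hiN]
    · have hiE : i ∉ E := fun hiE => hiN (hEN i hiE ⟨N + 1, hiN1⟩)
      rw [hh]; simp only [if_neg hiN, if_neg hiE]
      rw [Stone17.fL, if_neg hiN]
  have hhV : h ∈ V := by
    apply hE
    intro i hiE
    by_cases hiS : ∃ n, i ∈ LL n
    · have hiN : i ∈ LL N := hEN i hiE hiS
      rw [hh]; simp only [if_pos hiN]
      rw [gval hiN]
    · have hiN : i ∉ LL N := fun hc => hiS ⟨N, hc⟩
      rw [hh]; simp only [if_neg hiN, if_pos hiE]
      rw [hg]; simp only [dif_neg hiS]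
  exact Set.disjoint_left.mp hUV hhU hhV
end
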